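/- arXiv:2410.10709 — 2 statements merged into one kernel-verified Lean document; each statement's English description precedes it below -/
import Mathlib

section
/- The matrix product of the Riordan arrays associated to (g,f) and (G,F) equals the Riordan array associated to (g·(G∘f), F∘f): for all n, j, ∑_k m_{n,k}(g,f) · m_{k,j}(G,F) = [z^n]( g·(G∘f) · (F∘f)^j ). -/
open PowerSeries

variable {K : Type*} [Field K]

/-- Composition (substitution) of formal power series: `pcomp A f = A ∘ f`,
intended for `f` with zero constant term, where `coeff n (f ^ k) = 0` for `k > n`. -/
noncomputable def pcomp (A f : PowerSeries K) : PowerSeries K :=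
  PowerSeries.mk fun n => ∑ k ∈ Finset.range (n + 1), coeff k A * coeff n (f ^ k)

/-- A formal power series is even if all its odd coefficients vanish. -/
def IsEvenPS (g : PowerSeries K) : Prop := ∀ n : ℕ, Odd n → coeff n g = 0

/-- A formal power series is odd if all its even coefficients vanish. -/
def IsOddPS (f : PowerSeries K) : Prop := ∀ n : ℕ, Even n → coeff n f = 0

open Finset

lemma coeff_pow_eq_zero' (f : PowerSeries K) (hf0 : constantCoeff f = 0)
    {n k : ℕ} (h : n < k) : coeff n (f ^ k) = 0 := by
  have hX : (X : PowerSeries K) ∣ f := X_dvd_iff.mpr hf0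
  obtain ⟨h', hfk⟩ := (pow_dvd_pow_of_dvd hX k)
  rw [hfk, coeff_mul]
  apply Finset.sum_eq_zero
  rintro ⟨a, b⟩ hab
  rw [Finset.HasAntidiagonal.mem_antidiagonal] at hab
  rw [coeff_X_pow, if_neg, zero_mul]
  omega

lemma coeff_mul_pow_eq_zero' (g f : PowerSeries K) (hf0 : constantCoeff f = 0)
    {n k : ℕ} (h : n < k) : coeff n (g * f ^ k) = 0 := by
  rw [coeff_mul]
  apply Finset.sum_eq_zero
  rintro ⟨a, b⟩ hab
  rw [Finset.HasAntidiagonal.mem_antidiagonal] at hab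
  rw [coeff_pow_eq_zero' f hf0 (by omega), mul_zero]

lemma coeff_mul_pcomp (g A f : PowerSeries K) (hf0 : constantCoeff f = 0) (n : ℕ) :
    coeff n (g * pcomp A f)
      = ∑ k ∈ range (n + 1), coeff k A * coeff n (g * f ^ k) := by
  rw [coeff_mul]
  have step : ∀ p ∈ Finset.HasAntidiagonal.antidiagonal n,
      coeff p.1 g * coeff p.2 (pcomp A f)
        = ∑ k ∈ range (n + 1), coeff p.1 g * (coeff k A * coeff p.2 (f ^ k)) := by
    rintro ⟨a, b⟩ hab
    rw [Finset.HasAntidiagonal.mem_antidiagonal] at hab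
    simp only [pcomp, coeff_mk]
    rw [← Finset.mul_sum]
    congr 1
    apply Finset.sum_subset
    · intro x hx
      rw [Finset.mem_range] at hx ⊢; omega
    · intro x _ hx
      rw [Finset.mem_range, not_lt] at hx
      rw [coeff_pow_eq_zero' f hf0 (by omega), mul_zero]
  rw [Finset.sum_congr rfl step, Finset.sum_comm]
  apply Finset.sum_congr rfl
  intro k _
  rw [coeff_mul, Finset.mul_sum]
  apply Finset.sum_congr rfl
  intro p _
  ring

lemma helper_sum (n : ℕ) (h : ℕ → ℕ → K) (c : ℕ → K) (hc : ∀ r, n < r → c r = 0) :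
    ∑ r ∈ range (n + 1), (∑ p ∈ Finset.HasAntidiagonal.antidiagonal r, h p.1 p.2) * c r
      = ∑ a ∈ range (n + 1), ∑ b ∈ range (n + 1), h a b * c (a + b) := by
  have L : ∑ r ∈ range (n + 1), (∑ p ∈ Finset.HasAntidiagonal.antidiagonal r, h p.1 p.2) * c r
      = ∑ r ∈ range (n + 1), ∑ p ∈ Finset.HasAntidiagonal.antidiagonal r, h p.1 p.2 * c (p.1 + p.2) := by
    apply Finset.sum_congr rfl
    intro r _
    rw [Finset.sum_mul]
    apply Finset.sum_congr rfl
    rintro ⟨a, b⟩ hab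
    rw [Finset.HasAntidiagonal.mem_antidiagonal] at hab
    rw [hab]
  rw [L]
  have disj : (↑(range (n + 1)) : Set ℕ).PairwiseDisjoint Finset.HasAntidiagonal.antidiagonal := by
    intro a _ b _ hab
    simp only [Finset.disjoint_left]
    rintro ⟨x, y⟩ hx hy
    rw [Finset.HasAntidiagonal.mem_antidiagonal] at hx hy
    exact hab (hx ▸ hy ▸ rfl)
  rw [← Finset.sum_biUnion disj]
  rw [← Finset.sum_product']
  apply Finset.sum_subset
  · rintro ⟨a, b⟩ hab
    simp only [Finset.mem_biUnion, Finset.mem_range, Finset.HasAntidiagonal.mem_antidiagonal] at hab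
    obtain ⟨r, hr, hrab⟩ := hab
    simp only [Finset.mem_product, Finset.mem_range]
    omega
  · rintro ⟨a, b⟩ hab hnab
    simp only [Finset.mem_biUnion, Finset.mem_range, Finset.HasAntidiagonal.mem_antidiagonal] at hnab
    have : n < a + b := by
      by_contra hle
      exact hnab ⟨a + b, by omega, rfl⟩
    rw [hc _ this, mul_zero]

lemma pcomp_mul (A B f : PowerSeries K) (hf0 : constantCoeff f = 0) :
    pcomp (A * B) f = pcomp A f * pcomp B f := by
  ext n
  have RHS : coeff n (pcomp A f * pcomp B f)
      = ∑ k ∈ range (n + 1), ∑ m ∈ range (n + 1),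
          coeff k B * (coeff m A * coeff n (f ^ (k + m))) := by
    rw [coeff_mul_pcomp (pcomp A f) B f hf0 n]
    apply Finset.sum_congr rfl
    intro k _
    rw [mul_comm (pcomp A f) (f ^ k), coeff_mul_pcomp (f ^ k) A f hf0 n, Finset.mul_sum]
    apply Finset.sum_congr rfl
    intro m _
    rw [← pow_add]
  rw [RHS]
  have LHS : coeff n (pcomp (A * B) f)
      = ∑ r ∈ range (n + 1),
          (∑ p ∈ Finset.HasAntidiagonal.antidiagonal r, coeff p.1 A * coeff p.2 B) * coeff n (f ^ r) := by
    simp only [pcomp, coeff_mk]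
    apply Finset.sum_congr rfl
    intro r _
    rw [coeff_mul]
  rw [LHS, helper_sum n (fun a b => coeff a A * coeff b B) (fun r => coeff n (f ^ r))
    (fun r hr => coeff_pow_eq_zero' f hf0 hr)]
  rw [Finset.sum_comm]
  apply Finset.sum_congr rfl
  intro k _
  apply Finset.sum_congr rfl
  intro m _
  rw [add_comm m k]
  ring

lemma pcomp_one (f : PowerSeries K) : pcomp (1 : PowerSeries K) f = 1 := by
  ext n
  simp only [pcomp, coeff_mk]
  rw [Finset.sum_eq_single 0]
  · simp
  · intro b _ hb
    rw [coeff_one, if_neg hb, zero_mul]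
  · simp

lemma pcomp_pow (F f : PowerSeries K) (hf0 : constantCoeff f = 0) (j : ℕ) :
    pcomp (F ^ j) f = (pcomp F f) ^ j := by
  induction j with
  | zero => simp [pcomp_one]
  | succ j ih => rw [pow_succ, pow_succ, pcomp_mul _ _ _ hf0, ih]

/-- The matrix product of the Riordan arrays of (g,f) and (G,F) is the
Riordan array of (g·(G∘f), F∘f), entrywise. -/
theorem stmt3 (g f G F : PowerSeries K)
    (hg : constantCoeff g ≠ 0)
    (hf0 : constantCoeff f = 0) (hf1 : coeff 1 f ≠ 0)
    (hG : constantCoeff G ≠ 0)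
    (hF0 : constantCoeff F = 0) (hF1 : coeff 1 F ≠ 0)
    (n j : ℕ) :
    ∑ᶠ k : ℕ, coeff n (g * f ^ k) * coeff k (G * F ^ j)
      = coeff n (g * pcomp G f * (pcomp F f) ^ j) := by
  rw [mul_assoc, ← pcomp_pow F f hf0 j, ← pcomp_mul G (F ^ j) f hf0,
    coeff_mul_pcomp g (G * F ^ j) f hf0 n]
  rw [finsum_eq_finset_sum_of_support_subset _ (s := range (n + 1))]
  · apply Finset.sum_congr rfl
    intro k _
    ring
  · intro k hk
    simp only [Function.mem_support] at hk
    simp only [Finset.coe_range, Set.mem_Iio]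
    by_contra hkn
    exact hk (by rw [coeff_mul_pow_eq_zero' g f hf0 (by omega), zero_mul])
end

section
/- The type-1 almost Appell subgroup {(g, z, f₂) : g even with g(0)≠0, f₂ odd with nonzero linear coefficient} of the Double Riordan group contains the Appell subgroup {(g, z, z) : g even with g(0)≠0}, and the Appell subgroup is a normal subgroup of the Double Riordan group. -/
open PowerSeries

variable {K : Type*} [Field K]

/-- Membership in the Double Riordan group. -/
def DRMem (p : PowerSeries K × PowerSeries K × PowerSeries K) : Prop :=
  IsEvenPS p.1 ∧ constantCoeff p.1 ≠ 0 ∧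
  IsOddPS p.2.1 ∧ coeff 1 p.2.1 ≠ 0 ∧
  IsOddPS p.2.2 ∧ coeff 1 p.2.2 ≠ 0

/-- The Double Riordan product relation: r = p * q, computed via an odd square
root h of f₁f₂ and the quotients q₁ = f₁/h, q₂ = f₂/h. -/
noncomputable def DRmul (p q r : PowerSeries K × PowerSeries K × PowerSeries K) : Prop :=
  ∃ h q₁ q₂ : PowerSeries K, IsOddPS h ∧ h ^ 2 = p.2.1 * p.2.2 ∧
    q₁ * h = p.2.1 ∧ q₂ * h = p.2.2 ∧
    r = (p.1 * pcomp q.1 h, q₁ * pcomp q.2.1 h, q₂ * pcomp q.2.2 h)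

/-- Membership in the type-1 almost Appell subgroup. -/
def Type1Mem (p : PowerSeries K × PowerSeries K × PowerSeries K) : Prop :=
  IsEvenPS p.1 ∧ constantCoeff p.1 ≠ 0 ∧ p.2.1 = X ∧
  IsOddPS p.2.2 ∧ coeff 1 p.2.2 ≠ 0

/-- Membership in the Appell subgroup. -/
def AppellMem (p : PowerSeries K × PowerSeries K × PowerSeries K) : Prop :=
  IsEvenPS p.1 ∧ constantCoeff p.1 ≠ 0 ∧ p.2.1 = X ∧ p.2.2 = X

lemma coeff_pcomp (A f : PowerSeries K) (n : ℕ) :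
    coeff n (pcomp A f) = ∑ k ∈ Finset.range (n + 1), coeff k A * coeff n (f ^ k) := by
  simp [pcomp]

lemma isOddPS_X : IsOddPS (X : PowerSeries K) := by
  intro n hn
  rw [coeff_X, if_neg]
  rintro rfl
  rw [Nat.even_iff] at hn
  omega

lemma odd_pow_coeff (h : PowerSeries K) (hh : IsOddPS h) :
    ∀ k n : ℕ, ¬ Even (n + k) → coeff n (h ^ k) = 0 := by
  intro k
  induction k with
  | zero =>
    intro n hn
    simp only [pow_zero, coeff_one]
    rw [if_neg]
    rintro rfl
    exact hn Even.zero
  | succ k ih =>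
    intro n hn
    rw [pow_succ, coeff_mul]
    apply Finset.sum_eq_zero
    rintro ⟨i, j⟩ hij
    rw [Finset.HasAntidiagonal.mem_antidiagonal] at hij
    by_cases hik : Even (i + k)
    · have hj : Even j := by
        rw [Nat.even_iff] at hik hn ⊢
        omega
      rw [hh j hj, mul_zero]
    · rw [ih i hik, zero_mul]

lemma pcomp_even (g h : PowerSeries K) (hg : IsEvenPS g) (hh : IsOddPS h) :
    IsEvenPS (pcomp g h) := by
  intro n hn
  rw [coeff_pcomp]
  apply Finset.sum_eq_zero
  intro k _
  rcases Nat.even_or_odd k with hk | hk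
  · rw [odd_pow_coeff h hh k n (by rw [Nat.odd_iff] at hn; rw [Nat.even_iff] at hk ⊢; omega),
      mul_zero]
  · rw [hg k hk, zero_mul]

lemma constantCoeff_pcomp (g h : PowerSeries K) :
    constantCoeff (pcomp g h) = constantCoeff g := by
  rw [← coeff_zero_eq_constantCoeff, coeff_pcomp]
  simp

lemma pcomp_X (h : PowerSeries K) (hh : IsOddPS h) : pcomp (X : PowerSeries K) h = h := by
  ext n
  rw [coeff_pcomp]
  rcases Nat.eq_zero_or_pos n with rfl | hn
  · simp [hh 0 Even.zero]
  · rw [Finset.sum_eq_single 1]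
    · simp
    · intro k _ h1
      rw [coeff_X, if_neg h1, zero_mul]
    · intro hmem
      exact absurd (Finset.mem_range.mpr (by omega)) hmem

lemma pcomp_neg_even (g h : PowerSeries K) (hg : IsEvenPS g) :
    pcomp g (-h) = pcomp g h := by
  ext n
  rw [coeff_pcomp, coeff_pcomp]
  apply Finset.sum_congr rfl
  intro k _
  rcases Nat.even_or_odd k with hk | hk
  · rw [hk.neg_pow]
  · rw [hg k hk, zero_mul, zero_mul]

lemma pcomp_neg_odd (f h : PowerSeries K) (hf : IsOddPS f) :
    pcomp f (-h) = - pcomp f h := by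
  ext n
  rw [map_neg, coeff_pcomp, coeff_pcomp, ← Finset.sum_neg_distrib]
  apply Finset.sum_congr rfl
  intro k _
  rcases Nat.even_or_odd k with hk | hk
  · rw [hf k hk, zero_mul, zero_mul, neg_zero]
  · rw [hk.neg_pow, map_neg, mul_neg]

lemma sq_eq_cases (a b : PowerSeries K) (hab : a ^ 2 = b ^ 2) : a = b ∨ a = -b := by
  have h0 : (a - b) * (a + b) = 0 := by linear_combination hab
  rcases mul_eq_zero.mp h0 with h | h
  · exact Or.inl (sub_eq_zero.mp h)
  · exact Or.inr (eq_neg_of_add_eq_zero_left h)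

/-- The type-1 almost Appell subgroup contains the Appell subgroup, and the
Appell subgroup is normal in the Double Riordan group: any conjugate
D * A * D⁻¹ of an Appell element A by a Double Riordan element D is Appell. -/
theorem stmt11 :
    (∀ p : PowerSeries K × PowerSeries K × PowerSeries K,
      AppellMem p → Type1Mem p) ∧
    (∀ D Dinv A P₁ P₂ : PowerSeries K × PowerSeries K × PowerSeries K,
      DRMem D → DRMem Dinv → AppellMem A →
      DRmul D Dinv ((1 : PowerSeries K), (X : PowerSeries K), (X : PowerSeries K)) →
      DRmul Dinv D ((1 : PowerSeries K), (X : PowerSeries K), (X : PowerSeries K)) →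
      DRmul D A P₁ → DRmul P₁ Dinv P₂ → AppellMem P₂) := by
  constructor
  · rintro ⟨g, f₁, f₂⟩ ⟨hg, hc, h1, h2⟩
    refine ⟨hg, hc, h1, ?_, ?_⟩
    · rw [h2]; exact isOddPS_X
    · rw [h2]; simp
  · rintro ⟨G, F₁, F₂⟩ ⟨Gi, F₁i, F₂i⟩ ⟨g, a₁, a₂⟩ P₁ P₂
      ⟨hGe, hGc, hF₁o, hF₁c, hF₂o, hF₂c⟩ ⟨hGie, hGic, hF₁io, hF₁ic, hF₂io, hF₂ic⟩
      ⟨hge, hgc, ha₁, ha₂⟩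
      ⟨h₂, q₁₂, q₂₂, ho₂, hsq₂, hq₁₂, hq₂₂, heq₂⟩
      _
      ⟨h, q₁, q₂, ho, hsq, hq₁, hq₂, heqP₁⟩
      ⟨h', q₁', q₂', ho', hsq', hq₁', hq₂', heqP₂⟩
    simp only at *
    subst ha₁ ha₂ heqP₁ heqP₂
    simp only [Prod.mk.injEq] at heq₂
    obtain ⟨e1, e2, e3⟩ := heq₂
    have hx : pcomp (X : PowerSeries K) h = h := pcomp_X h ho
    simp only [hx] at hsq' hq₁' hq₂' ⊢
    simp only [hq₁, hq₂] at hsq' hq₁' hq₂'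
    -- h₂ ≠ 0
    have hF₁ : F₁ ≠ 0 := fun h0 => hF₁c (by rw [h0, map_zero])
    have hF₂ : F₂ ≠ 0 := fun h0 => hF₂c (by rw [h0, map_zero])
    have hh₂ : h₂ ≠ 0 := by
      intro h0
      apply mul_ne_zero hF₁ hF₂
      rw [← hsq₂, h0]
      ring
    have hcase : h' = h₂ ∨ h' = -h₂ := sq_eq_cases _ _ (by rw [hsq', hsq₂])
    have hP1 : G * pcomp g h * pcomp Gi h₂ = pcomp g h := by
      rw [mul_comm G (pcomp g h), mul_assoc, ← e1, mul_one]
    rcases hcase with rfl | rfl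
    · have hq1 : q₁' = q₁₂ := mul_right_cancel₀ hh₂ (hq₁'.trans hq₁₂.symm)
      have hq2 : q₂' = q₂₂ := mul_right_cancel₀ hh₂ (hq₂'.trans hq₂₂.symm)
      refine ⟨?_, ?_, ?_, ?_⟩
      · show IsEvenPS (G * pcomp g h * pcomp Gi h')
        rw [hP1]; exact pcomp_even g h hge ho
      · show constantCoeff (G * pcomp g h * pcomp Gi h') ≠ 0
        rwa [hP1, constantCoeff_pcomp]
      · show q₁' * pcomp F₁i h' = X
        rw [hq1, ← e2]
      · show q₂' * pcomp F₂i h' = X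
        rw [hq2, ← e3]
    · have hq1 : q₁' = -q₁₂ := by
        apply mul_right_cancel₀ hh₂
        linear_combination hq₁₂ - hq₁'
      have hq2 : q₂' = -q₂₂ := by
        apply mul_right_cancel₀ hh₂
        linear_combination hq₂₂ - hq₂'
      have hPG : pcomp Gi (-h₂) = pcomp Gi h₂ := pcomp_neg_even Gi h₂ hGie
      refine ⟨?_, ?_, ?_, ?_⟩
      · show IsEvenPS (G * pcomp g h * pcomp Gi (-h₂))
        rw [hPG, hP1]; exact pcomp_even g h hge ho
      · show constantCoeff (G * pcomp g h * pcomp Gi (-h₂)) ≠ 0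
        rwa [hPG, hP1, constantCoeff_pcomp]
      · show q₁' * pcomp F₁i (-h₂) = X
        rw [hq1, pcomp_neg_odd F₁i h₂ hF₁io, neg_mul_neg, ← e2]
      · show q₂' * pcomp F₂i (-h₂) = X
        rw [hq2, pcomp_neg_odd F₂i h₂ hF₂io, neg_mul_neg, ← e3]
end
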